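/- Let Γ be a nonempty set and let N be an equivalent norm on c₀(Γ) that is solid, normalized (N(e_γ) = 1 for all γ ∈ Γ), and 1-symmetric, meaning that N(x ∘ π) = N(x) for every bijection π : Γ → Γ and every x ∈ c₀(Γ). If N is strictly monotone, then N fails the local diameter two property: there exist a linear functional f : c₀(Γ) → ℝ with sup{ f(x) : N(x) ≤ 1 } = 1, a δ > 0, and a d < 2, such that N(u − v) ≤ d whenever N(u) ≤ 1, N(v) ≤ 1, f(u) > 1 − δ and f(v) > 1 − δ. -/
import Mathlib


open Classical in
/-- The unit vector (indicator of `{γ}`) in the space of real functions on `Γ`. -/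
noncomputable def eVec {Γ : Type*} (γ : Γ) : Γ → ℝ := fun δ => if δ = γ then 1 else 0

/-- Membership in `c₀(Γ)`: functions vanishing at infinity. -/
def IsC0 {Γ : Type*} (x : Γ → ℝ) : Prop := ∀ ε : ℝ, 0 < ε → {γ | ε ≤ |x γ|}.Finite

/-- The supremum norm of a function on `Γ`. -/
noncomputable def supNorm {Γ : Type*} (x : Γ → ℝ) : ℝ := ⨆ γ, |x γ|

lemma isC0_eVec {Γ : Type*} (γ₀ : Γ) : IsC0 (eVec γ₀) := by
  intro ε hε
  apply Set.Finite.subset (Set.finite_singleton γ₀)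
  intro γ hγ
  simp only [Set.mem_setOf_eq, eVec] at hγ
  by_contra h
  simp only [Set.mem_singleton_iff] at h
  rw [if_neg h] at hγ
  simp at hγ; linarith

lemma IsC0.mono {Γ : Type*} {x y : Γ → ℝ} (hx : IsC0 x) (h : ∀ γ, |y γ| ≤ |x γ|) :
    IsC0 y := by
  intro ε hε
  apply (hx ε hε).subset
  intro γ hγ
  exact le_trans hγ (h γ)

lemma IsC0.smul {Γ : Type*} {x : Γ → ℝ} (hx : IsC0 x) (a : ℝ) : IsC0 (a • x) := by
  intro ε hε
  have hpos : 0 < |a| + 1 := by positivity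
  apply (hx (ε / (|a| + 1)) (by positivity)).subset
  intro γ hγ
  simp only [Set.mem_setOf_eq, Pi.smul_apply, smul_eq_mul, abs_mul] at hγ ⊢
  rw [div_le_iff₀ hpos]
  calc ε ≤ |a| * |x γ| := hγ
    _ ≤ (|a| + 1) * |x γ| := by nlinarith [abs_nonneg (x γ)]
    _ = |x γ| * (|a| + 1) := by ring

lemma IsC0.add {Γ : Type*} {x y : Γ → ℝ} (hx : IsC0 x) (hy : IsC0 y) :
    IsC0 (x + y) := by
  intro ε hε
  apply ((hx (ε/2) (by positivity)).union (hy (ε/2) (by positivity))).subset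
  intro γ hγ
  simp only [Set.mem_setOf_eq, Pi.add_apply, Set.mem_union] at hγ ⊢
  by_contra h
  push_neg at h
  have := abs_add_le (x γ) (y γ)
  linarith [h.1, h.2]

lemma IsC0.sub {Γ : Type*} {x y : Γ → ℝ} (hx : IsC0 x) (hy : IsC0 y) :
    IsC0 (x - y) := by
  have := hx.add (hy.smul (-1))
  apply this.mono
  intro γ
  simp only [Pi.sub_apply, Pi.add_apply, Pi.smul_apply, smul_eq_mul]
  rw [show x γ + -1 * y γ = x γ - y γ by ring]

lemma supNorm_le {Γ : Type*} [Nonempty Γ] {x : Γ → ℝ} {a : ℝ} (ha : 0 ≤ a)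
    (h : ∀ γ, |x γ| ≤ a) : supNorm x ≤ a :=
  Real.iSup_le h ha

/-- A solid, normalized, 1-symmetric equivalent norm on `c₀(Γ)` which is strictly
monotone fails the local diameter two property. -/
theorem symmetric_strictlyMonotone_c0_fails_LD2P
    {Γ : Type*} [Nonempty Γ] (N : (Γ → ℝ) → ℝ)
    (hzero : ∀ x : Γ → ℝ, IsC0 x → (N x = 0 ↔ x = 0))
    (hsmul : ∀ (a : ℝ) (x : Γ → ℝ), IsC0 x → N (a • x) = |a| * N x)
    (htri : ∀ x y : Γ → ℝ, IsC0 x → IsC0 y → N (x + y) ≤ N x + N y)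
    (hequiv : ∃ c C : ℝ, 0 < c ∧ 0 < C ∧ ∀ x : Γ → ℝ, IsC0 x →
      c * supNorm x ≤ N x ∧ N x ≤ C * supNorm x)
    (hsolid : ∀ x y : Γ → ℝ, IsC0 x → IsC0 y → (∀ γ, |x γ| ≤ |y γ|) → N x ≤ N y)
    (hnormalized : ∀ γ : Γ, N (eVec γ) = 1)
    (hsymm : ∀ (π : Γ ≃ Γ) (x : Γ → ℝ), IsC0 x → N (fun γ => x (π γ)) = N x)
    (hsm : ∀ x y : Γ → ℝ, IsC0 x → IsC0 y → (∀ γ, |y γ| ≤ |x γ|) →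
      (∃ β, |y β| < |x β|) → N y < N x) :
    ∃ f : (Γ → ℝ) →ₗ[ℝ] ℝ,
      sSup {r : ℝ | ∃ x : Γ → ℝ, IsC0 x ∧ N x ≤ 1 ∧ f x = r} = 1 ∧
      ∃ δ : ℝ, 0 < δ ∧ ∃ d : ℝ, d < 2 ∧
        ∀ u v : Γ → ℝ, IsC0 u → IsC0 v → N u ≤ 1 → N v ≤ 1 →
          1 - δ < f u → 1 - δ < f v → N (u - v) ≤ d := by
  classical
  obtain ⟨γ₀⟩ := ‹Nonempty Γ›
  -- basic bound: every element of the unit ball has |x γ₀| ≤ 1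
  have hbound : ∀ x : Γ → ℝ, IsC0 x → N x ≤ 1 → |x γ₀| ≤ 1 := by
    intro x hxC0 hxN
    have h1 : N (x γ₀ • eVec γ₀) ≤ N x := by
      apply hsolid _ _ ((isC0_eVec γ₀).smul _) hxC0
      intro γ
      simp only [Pi.smul_apply, smul_eq_mul, eVec, abs_mul]
      by_cases h : γ = γ₀
      · subst h; simp
      · simp [h]
    rw [hsmul _ _ (isC0_eVec γ₀), hnormalized γ₀, mul_one] at h1
    exact le_trans h1 hxN
  refine ⟨LinearMap.proj γ₀, ?_, ?_⟩
  · -- sSup = 1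
    have hmem : (1 : ℝ) ∈ {r : ℝ | ∃ x : Γ → ℝ, IsC0 x ∧ N x ≤ 1 ∧
        (LinearMap.proj γ₀ : (Γ → ℝ) →ₗ[ℝ] ℝ) x = r} := by
      refine ⟨eVec γ₀, isC0_eVec γ₀, le_of_eq (hnormalized γ₀), ?_⟩
      simp [eVec, LinearMap.proj_apply]
    have hub : ∀ r ∈ {r : ℝ | ∃ x : Γ → ℝ, IsC0 x ∧ N x ≤ 1 ∧
        (LinearMap.proj γ₀ : (Γ → ℝ) →ₗ[ℝ] ℝ) x = r}, r ≤ 1 := by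
      rintro r ⟨x, hxC0, hxN, rfl⟩
      calc (LinearMap.proj γ₀ : (Γ → ℝ) →ₗ[ℝ] ℝ) x = x γ₀ := rfl
        _ ≤ |x γ₀| := le_abs_self _
        _ ≤ 1 := hbound x hxC0 hxN
    exact le_antisymm (csSup_le ⟨1, hmem⟩ hub) (le_csSup ⟨1, hub⟩ hmem)
  · -- the LD2P failure
    obtain ⟨c, C, hc, hC, hcC⟩ := hequiv
    by_cases hsing : ∃ γ₁ : Γ, γ₁ ≠ γ₀
    · obtain ⟨γ₁, hγ₁⟩ := hsing
      set ε : ℝ := 1 / (4 * C) with hεdef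
      have hε : 0 < ε := by positivity
      have pairC0 : ∀ (a t : ℝ) (γ : Γ), IsC0 (a • eVec γ₀ + t • eVec γ) :=
        fun a t γ => ((isC0_eVec γ₀).smul a).add ((isC0_eVec γ).smul t)
      have pv : ∀ (a t : ℝ) (γ δ : Γ), γ ≠ γ₀ →
          (a • eVec γ₀ + t • eVec γ) δ =
            if δ = γ₀ then a else if δ = γ then t else 0 := by
        intro a t γ δ hγ
        simp only [Pi.add_apply, Pi.smul_apply, smul_eq_mul, eVec]
        by_cases h1 : δ = γ₀
        · have h2 : ¬ δ = γ := by rintro rfl; exact hγ h1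
          rw [if_pos h1, if_pos h1, if_neg h2]; ring
        · by_cases h2 : δ = γ
          · rw [if_neg h1, if_neg h1, if_pos h2, if_pos h2]; ring
          · rw [if_neg h1, if_neg h1, if_neg h2, if_neg h2]; ring
      have symmPair : ∀ γ : Γ, γ ≠ γ₀ → ∀ a t : ℝ,
          N (a • eVec γ₀ + t • eVec γ) = N (a • eVec γ₀ + t • eVec γ₁) := by
        intro γ hγ a t
        have h := hsymm (Equiv.swap γ γ₁) (a • eVec γ₀ + t • eVec γ₁) (pairC0 a t γ₁)
        rw [← h]
        congr 1
        funext δ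
        rw [pv a t γ₁ _ hγ₁, pv a t γ δ hγ]
        by_cases h1 : δ = γ₀
        · subst h1
          rw [Equiv.swap_apply_of_ne_of_ne (Ne.symm hγ) (Ne.symm hγ₁)]
          simp
        · by_cases h2 : δ = γ
          · subst h2
            rw [Equiv.swap_apply_left, if_neg hγ₁, if_pos rfl, if_neg h1, if_pos rfl]
          · by_cases h3 : δ = γ₁
            · subst h3
              rw [Equiv.swap_apply_right, if_neg hγ, if_neg (Ne.symm h2), if_neg hγ₁,
                if_neg h2]
            · rw [Equiv.swap_apply_of_ne_of_ne h2 h3, if_neg h1, if_neg h1, if_neg h2,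
                if_neg h3]
      have hkey : 1 < N ((1:ℝ) • eVec γ₀ + ε • eVec γ₁) := by
        have := hsm ((1:ℝ) • eVec γ₀ + ε • eVec γ₁) (eVec γ₀) (pairC0 1 ε γ₁)
          (isC0_eVec γ₀) ?_ ?_
        · rwa [hnormalized γ₀] at this
        · intro γ
          rw [pv _ _ _ _ hγ₁]
          simp only [eVec]
          by_cases h : γ = γ₀
          · rw [if_pos h, if_pos h]
          · rw [if_neg h, abs_zero]
            exact abs_nonneg _
        · refine ⟨γ₁, ?_⟩
          rw [pv _ _ _ _ hγ₁, if_neg hγ₁, if_pos rfl]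
          simp only [eVec, if_neg hγ₁, abs_zero]
          rw [abs_of_pos hε]
          exact hε
      set A : ℝ := N ((1:ℝ) • eVec γ₀ + ε • eVec γ₁) - 1 with hAdef
      have hA : 0 < A := by simp only [hAdef]; linarith
      set δ₀ : ℝ := min (A / 2) (1 / 2) with hδ₀def
      have hδ₀ : 0 < δ₀ := lt_min (by linarith) (by norm_num)
      have hδ₀half : δ₀ ≤ 1 / 2 := min_le_right _ _
      have hδ₀A : δ₀ ≤ A / 2 := min_le_left _ _
      have keylem : ∀ γ : Γ, γ ≠ γ₀ → ∀ u : Γ → ℝ, IsC0 u → N u ≤ 1 →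
          1 - δ₀ < u γ₀ → |u γ| ≤ ε := by
        intro γ hγ u hu hNu hfu
        by_contra hlt
        push_neg at hlt
        have hh1 : N ((1 - δ₀) • eVec γ₀ + ε • eVec γ) ≤ N u := by
          apply hsolid _ _ (pairC0 _ _ _) hu
          intro δ
          rw [pv _ _ _ _ hγ]
          split_ifs with h1 h2
          · subst h1
            rw [abs_of_nonneg (by linarith : (0:ℝ) ≤ 1 - δ₀)]
            exact le_trans (by linarith) (le_abs_self _)
          · subst h2
            rw [abs_of_pos hε]
            exact hlt.le
          · simp
        have h2 : N ((1 - δ₀) • eVec γ₀ + ε • eVec γ₁) ≤ 1 := by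
          rw [← symmPair γ hγ]
          exact le_trans hh1 hNu
        have h3 : N ((1:ℝ) • eVec γ₀ + ε • eVec γ₁) ≤
            δ₀ + N ((1 - δ₀) • eVec γ₀ + ε • eVec γ₁) := by
          have heq : (1:ℝ) • eVec γ₀ + ε • eVec γ₁ =
              (δ₀ • eVec γ₀) + ((1 - δ₀) • eVec γ₀ + ε • eVec γ₁) := by
            funext δ
            simp only [Pi.add_apply, Pi.smul_apply, smul_eq_mul]
            ring
          rw [heq]
          have ht := htri (δ₀ • eVec γ₀) ((1 - δ₀) • eVec γ₀ + ε • eVec γ₁)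
            ((isC0_eVec γ₀).smul _) (pairC0 _ _ _)
          rwa [hsmul _ _ (isC0_eVec γ₀), hnormalized γ₀, mul_one,
            abs_of_pos hδ₀] at ht
        have : A ≤ δ₀ := by
          have : N ((1:ℝ) • eVec γ₀ + ε • eVec γ₁) ≤ δ₀ + 1 := by linarith
          simp only [hAdef]; linarith
        linarith
      refine ⟨δ₀, hδ₀, 1, by norm_num, ?_⟩
      intro u v hu hv hNu hNv hfu hfv
      have hfu' : 1 - δ₀ < u γ₀ := hfu
      have hfv' : 1 - δ₀ < v γ₀ := hfv
      -- tails
      have tailbound : ∀ w : Γ → ℝ, IsC0 w → N w ≤ 1 → 1 - δ₀ < w γ₀ →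
          N (w - w γ₀ • eVec γ₀) ≤ 1 / 4 := by
        intro w hw hNw hfw
        have hwt : IsC0 (w - w γ₀ • eVec γ₀) := hw.sub ((isC0_eVec γ₀).smul _)
        have hsup : supNorm (w - w γ₀ • eVec γ₀) ≤ ε := by
          apply supNorm_le hε.le
          intro γ
          by_cases h : γ = γ₀
          · subst h
            simp [eVec, hε.le]
          · have : (w - w γ₀ • eVec γ₀) γ = w γ := by
              simp [eVec, h]
            rw [this]
            exact keylem γ h w hw hNw hfw
        have := (hcC _ hwt).2
        have hCε : C * ε = 1 / 4 := by
          rw [hεdef]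
          field_simp
        calc N (w - w γ₀ • eVec γ₀) ≤ C * supNorm (w - w γ₀ • eVec γ₀) := this
          _ ≤ C * ε := by nlinarith
          _ = 1 / 4 := hCε
      have hdecomp : u - v = ((u γ₀ - v γ₀) • eVec γ₀) +
          ((u - u γ₀ • eVec γ₀) + (-1 : ℝ) • (v - v γ₀ • eVec γ₀)) := by
        funext δ
        simp only [Pi.add_apply, Pi.sub_apply, Pi.smul_apply, smul_eq_mul]
        ring
      have hC0u : IsC0 (u - u γ₀ • eVec γ₀) := hu.sub ((isC0_eVec γ₀).smul _)
      have hC0v : IsC0 (v - v γ₀ • eVec γ₀) := hv.sub ((isC0_eVec γ₀).smul _)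
      have ht1 := htri ((u γ₀ - v γ₀) • eVec γ₀)
        ((u - u γ₀ • eVec γ₀) + (-1 : ℝ) • (v - v γ₀ • eVec γ₀))
        ((isC0_eVec γ₀).smul _) (hC0u.add (hC0v.smul _))
      have ht2 := htri (u - u γ₀ • eVec γ₀) ((-1 : ℝ) • (v - v γ₀ • eVec γ₀))
        hC0u (hC0v.smul _)
      have hN1 : N ((u γ₀ - v γ₀) • eVec γ₀) ≤ δ₀ := by
        rw [hsmul _ _ (isC0_eVec γ₀), hnormalized γ₀, mul_one]
        have h1 := hbound u hu hNu
        have h2 := hbound v hv hNv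
        rw [abs_le] at h1 h2 ⊢
        constructor <;> linarith [h1.1, h1.2, h2.1, h2.2]
      have hNneg : N ((-1 : ℝ) • (v - v γ₀ • eVec γ₀)) = N (v - v γ₀ • eVec γ₀) := by
        rw [hsmul _ _ hC0v]
        norm_num
      have hb1 := tailbound u hu hNu hfu'
      have hb2 := tailbound v hv hNv hfv'
      rw [hdecomp]
      calc N (((u γ₀ - v γ₀) • eVec γ₀) +
          ((u - u γ₀ • eVec γ₀) + (-1 : ℝ) • (v - v γ₀ • eVec γ₀)))
          ≤ N ((u γ₀ - v γ₀) • eVec γ₀) +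
            N ((u - u γ₀ • eVec γ₀) + (-1 : ℝ) • (v - v γ₀ • eVec γ₀)) := ht1
        _ ≤ δ₀ + (N (u - u γ₀ • eVec γ₀) + N ((-1 : ℝ) • (v - v γ₀ • eVec γ₀))) := by
            linarith
        _ ≤ 1 / 2 + (1 / 4 + 1 / 4) := by rw [hNneg] at *; linarith
        _ = 1 := by norm_num
    · -- Γ = {γ₀}
      push_neg at hsing
      refine ⟨1 / 2, by norm_num, 1, by norm_num, ?_⟩
      intro u v hu hv hNu hNv hfu hfv
      have hfu' : 1 - 1 / 2 < u γ₀ := hfu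
      have hfv' : 1 - 1 / 2 < v γ₀ := hfv
      have heq : u - v = (u γ₀ - v γ₀) • eVec γ₀ := by
        funext δ
        have hδ : δ = γ₀ := hsing δ
        subst hδ
        simp [eVec]
      rw [heq, hsmul _ _ (isC0_eVec γ₀), hnormalized γ₀, mul_one]
      have h1 := hbound u hu hNu
      have h2 := hbound v hv hNv
      rw [abs_le] at h1 h2 ⊢
      constructor <;> linarith [h1.1, h1.2, h2.1, h2.2]
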